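/- Let x be a fixed point of a conjunctive map F (F(x) = x) with θ = 1/2 and nonnegative coordinates in [0,1]^N. If x_i < 1/2 for some i, then for every j with i ∈ I_j we have x_j < 1/2. Consequently, if the wiring diagram (edges k → j when k ∈ I_j) is strongly connected and x_i < 1/2 for some i, then x_k < 1/2 for all k. -/

import Mathlib

/-!
At a fixed point each coordinate `x j` is a product of Hill factors `x k ^ n / (θ ^ n + x k ^ n)`
with values in `[0, 1]`, so it is at most any single factor. A factor with `x k < θ` is below
`1 / 2`, and with `θ = 1 / 2` this says that `x j` is again below `θ`. Lowness therefore
propagates along every edge of the wiring diagram, hence to every vertex when it is strongly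
connected.
-/

open Finset

noncomputable def hill (θ : ℝ) (n : ℕ) (t : ℝ) : ℝ := t ^ n / (θ ^ n + t ^ n)

section Hill

variable {θ t : ℝ} {n : ℕ}

lemma hill_nonneg (hθ : 0 ≤ θ) (ht : 0 ≤ t) : 0 ≤ hill θ n t := by
  unfold hill
  positivity

lemma hill_le_one (hθ : 0 ≤ θ) (ht : 0 ≤ t) : hill θ n t ≤ 1 :=
  div_le_one_of_le₀ (le_add_of_nonneg_left (pow_nonneg hθ n)) (by positivity)

lemma hill_lt_half (hn : n ≠ 0) (ht : 0 ≤ t) (htθ : t < θ) : hill θ n t < 1 / 2 := by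
  have hpow : t ^ n < θ ^ n := pow_lt_pow_left₀ htθ ht hn
  have hθ : 0 < θ := ht.trans_lt htθ
  have hden : 0 < θ ^ n + t ^ n := by positivity
  rw [hill, div_lt_iff₀ hden]
  linarith

lemma prod_hill_le_hill {ι : Type*} {s : Finset ι} {x : ι → ℝ} {i : ι} (hθ : 0 ≤ θ)
    (hx : ∀ k ∈ s, 0 ≤ x k) (hi : i ∈ s) :
    ∏ k ∈ s, hill θ n (x k) ≤ hill θ n (x i) := by
  simpa using prod_le_prod_of_subset_of_le_one (singleton_subset_iff.2 hi)
    (fun k hk => hill_nonneg hθ (hx k hk)) (fun k hk _ => hill_le_one hθ (hx k hk))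

end Hill

theorem fixed_point_low_propagates_general (n N : ℕ) (hn : 1 ≤ n)
    (I : Fin N → Finset (Fin N))
    (F : (Fin N → ℝ) → Fin N → ℝ)
    (hF : ∀ x j, F x j = ∏ k ∈ I j, (x k) ^ n / ((1 / 2 : ℝ) ^ n + (x k) ^ n))
    (x : Fin N → ℝ) (hx : ∀ k, x k ∈ Set.Icc (0 : ℝ) 1) (hfix : F x = x)
    (i : Fin N) (hi : x i < 1 / 2) :
    (∀ j, i ∈ I j → x j < 1 / 2) ∧
    ((∀ a b : Fin N, Relation.ReflTransGen (fun u v => u ∈ I v) a b) →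
      ∀ k, x k < 1 / 2) := by
  have hx0 (k : Fin N) : 0 ≤ x k := (hx k).1
  have step (a b : Fin N) (hab : a ∈ I b) (ha : x a < 1 / 2) : x b < 1 / 2 :=
    calc x b = ∏ k ∈ I b, hill (1 / 2) n (x k) := (congrFun hfix b).symm.trans (hF x b)
      _ ≤ hill (1 / 2) n (x a) := prod_hill_le_hill (by norm_num) (fun k _ => hx0 k) hab
      _ < 1 / 2 := hill_lt_half (by omega) (hx0 a) ha
  refine ⟨fun j hij => step i j hij hi, fun hconn k => ?_⟩
  induction hconn i k with
  | refl => exact hi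
  | tail _ hbc ih => exact step _ _ hbc ih

/-- Let x ∈ [0,1]^N be a fixed point of a conjunctive map F with θ = 1/2.
If x_i < 1/2 for some i, then x_j < 1/2 for every j with i ∈ I_j. Consequently, if the
wiring diagram (edge k → j when k ∈ I_j) is strongly connected, then x_k < 1/2 for all k. -/
theorem fixed_point_low_propagates (n N : ℕ) (hn : 1 ≤ n) (hN : 1 ≤ N)
    (I : Fin N → Finset (Fin N)) (hI : ∀ j, (I j).Nonempty)
    (F : (Fin N → ℝ) → Fin N → ℝ)
    (hF : ∀ x j, F x j = ∏ k ∈ I j, (x k) ^ n / ((1 / 2 : ℝ) ^ n + (x k) ^ n))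
    (x : Fin N → ℝ) (hx : ∀ k, x k ∈ Set.Icc (0 : ℝ) 1) (hfix : F x = x)
    (i : Fin N) (hi : x i < 1 / 2) :
    (∀ j, i ∈ I j → x j < 1 / 2) ∧
    ((∀ a b : Fin N, Relation.ReflTransGen (fun u v => u ∈ I v) a b) →
      ∀ k, x k < 1 / 2) :=
  fixed_point_low_propagates_general n N hn I F hF x hx hfix i hi
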